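/- arXiv:1905.02838 — 9 statements merged into one kernel-verified Lean document; each statement's English description precedes it below -/
import Mathlib

section
/- Let n ≥ 1 and let S be a nonempty set of bitvectors of width n. Suppose x ∈ S satisfies the following greedy (lexicographic-maximization) condition with respect to the attractor 0: for every k < n, if there exists y ∈ S with y.getMsbD j = x.getMsbD j for all j < k and y.getMsbD k = false, then x.getMsbD k = false. Then x.toNat ≤ y.toNat for every y ∈ S; i.e., x attains the minimum unsigned value over S. -/
/-!
Compare `x` with any `y ∈ S` at the most significant bit where they differ. On the more
significant bits they agree, so the greedy condition applies there: `x` cannot carry a `1`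
against a `0` of `y`. Hence `x` has the `0` and `y` the `1`, and this bit decides the unsigned
order in favour of `x`.
-/

namespace BitVec

theorem exists_first_getMsbD_ne {w : ℕ} {x y : BitVec w} (hxy : x ≠ y) :
    ∃ k < w, (∀ j < k, x.getMsbD j = y.getMsbD j) ∧ x.getMsbD k ≠ y.getMsbD k := by
  classical
  have hex : ∃ k, k < w ∧ x.getMsbD k ≠ y.getMsbD k := by
    by_contra! h
    exact hxy (eq_of_getMsbD_eq h)
  obtain ⟨hk, hne⟩ := Nat.find_spec hex
  refine ⟨Nat.find hex, hk, fun j hj => ?_, hne⟩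
  by_contra hj_ne
  exact Nat.find_min hex hj ⟨hj.trans hk, hj_ne⟩

theorem toNat_lt_toNat_of_getMsbD {w k : ℕ} {x y : BitVec w}
    (hpre : ∀ j < k, x.getMsbD j = y.getMsbD j)
    (hx : x.getMsbD k = false) (hy : y.getMsbD k = true) : x.toNat < y.toNat := by
  have hk : k < w := lt_of_getMsbD hy
  have hbit : ∀ z : BitVec w, z.toNat.testBit (w - 1 - k) = z.getMsbD k := fun z => by
    rw [testBit_toNat, getMsbD_eq_getLsbD, decide_eq_true hk, Bool.true_and]
  refine Nat.lt_of_testBit (w - 1 - k) (hbit x ▸ hx) (hbit y ▸ hy) fun j hj => ?_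
  rw [testBit_toNat, testBit_toNat]
  by_cases hjw : j < w
  · rw [getLsbD_eq_getMsbD, getLsbD_eq_getMsbD, hpre (w - 1 - j) (by omega)]
  · rw [getLsbD_of_ge x j (by omega), getLsbD_of_ge y j (by omega)]

end BitVec

theorem unsigned_min_lex_greedy_general (n : ℕ) (S : Set (BitVec n))
    (x : BitVec n)
    (hgreedy : ∀ k < n,
      (∃ y ∈ S, (∀ j < k, y.getMsbD j = x.getMsbD j) ∧ y.getMsbD k = false) →
      x.getMsbD k = false) :
    ∀ y ∈ S, x.toNat ≤ y.toNat := by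
  intro y hy
  by_contra! hlt
  obtain ⟨k, hk, hpre, hne⟩ := BitVec.exists_first_getMsbD_ne (x := y) (y := x)
    fun h => hlt.ne (congrArg BitVec.toNat h)
  cases hyk : y.getMsbD k
  · exact hne (hyk.trans (hgreedy k hk ⟨y, hy, hpre, hyk⟩).symm)
  · have hxk : x.getMsbD k = false := by simpa [hyk] using hne.symm
    exact hlt.not_gt <|
      BitVec.toNat_lt_toNat_of_getMsbD (fun j hj => (hpre j hj).symm) hxk hyk

theorem unsigned_min_lex_greedy (n : ℕ) (hn : 1 ≤ n) (S : Set (BitVec n))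
    (hS : S.Nonempty) (x : BitVec n) (hx : x ∈ S)
    (hgreedy : ∀ k < n,
      (∃ y ∈ S, (∀ j < k, y.getMsbD j = x.getMsbD j) ∧ y.getMsbD k = false) →
      x.getMsbD k = false) :
    ∀ y ∈ S, x.toNat ≤ y.toNat :=
  unsigned_min_lex_greedy_general n S x hgreedy
end

section
/- Let n ≥ 1, let a := BitVec.intMin n (the bitvector with MSB 1 and all other bits 0), and let S be a nonempty set of bitvectors of width n. Suppose x ∈ S satisfies: for every k < n, if there exists y ∈ S with y.getMsbD j = x.getMsbD j for all j < k and y.getMsbD k = a.getMsbD k, then x.getMsbD k = a.getMsbD k. Then x.toInt ≤ y.toInt for every y ∈ S; i.e., x attains the minimum two's-complement signed value over S. -/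
/-!
Xoring with the attractor `a` turns "bit `k` agrees with `a`" into "bit `k` is `0`", so the greedy
condition says that `x ^^^ a` is lexicographically, i.e. as an unsigned number, below every
`y ^^^ a` with `y ∈ S`. For `a = intMin (w + 1)`, flipping the sign bit is an order isomorphism from the
signed to the unsigned order: `(x ^^^ intMin (w + 1)).toNat = x.toInt + 2 ^ w`.
-/

namespace BitVec

theorem toNat_le_toNat_of_getMsbD {w : ℕ} {x y : BitVec w}
    (h : ∀ k, (∀ j < k, x.getMsbD j = y.getMsbD j) → x.getMsbD k = true → y.getMsbD k = true) :
    x.toNat ≤ y.toNat := by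
  induction w with
  | zero => simp [eq_nil x, eq_nil y]
  | succ w ih =>
    rw [← cons_msb_setWidth x, ← cons_msb_setWidth y] at h ⊢
    generalize x.msb = a, x.setWidth w = x', y.msb = b, y.setWidth w = y' at h ⊢
    simp only [toNat_cons', Nat.shiftLeft_eq]
    have := x'.isLt
    by_cases hab : a = b
    · subst hab
      suffices x'.toNat ≤ y'.toNat by omega
      refine ih fun k hk hx => ?_
      have hprefix : ∀ j < k + 1, (cons a x').getMsbD j = (cons a y').getMsbD j := by
        rintro (_ | j) hj
        · simp
        · simpa using hk j (by omega)
      simpa using h (k + 1) hprefix (by simpa using hx)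
    · have hmsb : a = true → b = true := by simpa using h 0 (by simp)
      rcases a with _ | _ <;> rcases b with _ | _ <;> simp_all
      omega

theorem toNat_xor_le_toNat_xor_of_greedy {w : ℕ} {S : Set (BitVec w)} {a x : BitVec w}
    (hgreedy : ∀ k < w,
      (∃ y ∈ S, (∀ j < k, y.getMsbD j = x.getMsbD j) ∧ y.getMsbD k = a.getMsbD k) →
      x.getMsbD k = a.getMsbD k) :
    ∀ y ∈ S, (x ^^^ a).toNat ≤ (y ^^^ a).toNat := by
  intro y hy
  refine toNat_le_toNat_of_getMsbD fun k hprefix hxk => ?_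
  have hk : k < w := lt_of_getMsbD hxk
  simp only [getMsbD_xor, Bool.xor_left_inj, bne_iff_ne, ne_eq] at hprefix hxk ⊢
  exact fun hyk => hxk (hgreedy k hk ⟨y, hy, fun j hj => (hprefix j hj).symm, hyk⟩)

theorem toNat_xor_intMin_succ {w : ℕ} (x : BitVec (w + 1)) :
    ((x ^^^ intMin (w + 1)).toNat : ℤ) = x.toInt + 2 ^ w := by
  rw [intMin, Nat.add_sub_cancel, ← true_cons_zero, ← cons_msb_setWidth x, cons_xor_cons,
    toInt_eq_msb_cond]
  generalize x.msb = b, x.setWidth w = r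
  have := r.isLt
  cases b <;> simp only [toNat_cons', msb_cons] <;> simp [Nat.shiftLeft_eq] <;> omega

theorem toInt_le_toInt_iff_toNat_xor_intMin_le {w : ℕ} {x y : BitVec w} :
    x.toInt ≤ y.toInt ↔ (x ^^^ intMin w).toNat ≤ (y ^^^ intMin w).toNat := by
  cases w with
  | zero => simp [eq_nil x, eq_nil y]
  | succ w =>
    have hx := toNat_xor_intMin_succ x
    have hy := toNat_xor_intMin_succ y
    omega

end BitVec

theorem signed_min_lex_greedy_general (n : ℕ) (S : Set (BitVec n)) (x : BitVec n)
    (hgreedy : ∀ k < n,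
      (∃ y ∈ S, (∀ j < k, y.getMsbD j = x.getMsbD j) ∧
        y.getMsbD k = (BitVec.intMin n).getMsbD k) →
      x.getMsbD k = (BitVec.intMin n).getMsbD k) :
    ∀ y ∈ S, x.toInt ≤ y.toInt := fun y hy =>
  BitVec.toInt_le_toInt_iff_toNat_xor_intMin_le.2
    (BitVec.toNat_xor_le_toNat_xor_of_greedy hgreedy y hy)

theorem signed_min_lex_greedy (n : ℕ) (hn : 1 ≤ n) (S : Set (BitVec n))
    (hS : S.Nonempty) (x : BitVec n) (hx : x ∈ S)
    (hgreedy : ∀ k < n,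
      (∃ y ∈ S, (∀ j < k, y.getMsbD j = x.getMsbD j) ∧
        y.getMsbD k = (BitVec.intMin n).getMsbD k) →
      x.getMsbD k = (BitVec.intMin n).getMsbD k) :
    ∀ y ∈ S, x.toInt ≤ y.toInt :=
  signed_min_lex_greedy_general n S x hgreedy
end

section
/- For bitvectors x, y of width n: x.toNat < y.toNat if and only if there exists k < n such that x.getMsbD j = y.getMsbD j for all j < k, x.getMsbD k = false, and y.getMsbD k = true. In other words, the unsigned order on bitvectors coincides with the lexicographic order on their bit sequences read from the most significant bit to the least significant bit. -/
-- The witness `i` is the most significant bit of `a ^^^ b`.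
theorem Nat.lt_iff_exists_testBit {a b : ℕ} :
    a < b ↔ ∃ i, a.testBit i = false ∧ b.testBit i = true ∧
      ∀ j, i < j → a.testBit j = b.testBit j := by
  refine ⟨fun hab => ?_, fun ⟨i, ha, hb, hagree⟩ => Nat.lt_of_testBit i ha hb hagree⟩
  obtain ⟨i, hdiff, hagree⟩ := Nat.exists_most_significant_bit (Nat.xor_ne_zero_iff.mpr hab.ne)
  simp only [Nat.testBit_xor, bne_eq_false_iff_eq] at hdiff hagree
  cases ha : a.testBit i <;> cases hb : b.testBit i <;>
    simp only [ha, hb, Bool.xor_self, Bool.false_xor, Bool.xor_false, Bool.false_eq_true] at hdiff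
  · exact ⟨i, ha, hb, hagree⟩
  · exact absurd hab (Nat.lt_of_testBit i hb ha fun j hj => (hagree j hj).symm).asymm

namespace BitVec

variable {n : ℕ}

theorem toNat_lt_toNat_iff_exists_getLsbD {x y : BitVec n} :
    x.toNat < y.toNat ↔ ∃ i < n, x.getLsbD i = false ∧ y.getLsbD i = true ∧
      ∀ j, i < j → x.getLsbD j = y.getLsbD j := by
  rw [Nat.lt_iff_exists_testBit]
  exact exists_congr fun i =>
    ⟨fun h => ⟨lt_of_getLsbD h.2.1, h⟩, fun h => h.2⟩

theorem getMsbD_sub_one_sub (x : BitVec n) {i : ℕ} (hi : i < n) :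
    x.getMsbD (n - 1 - i) = x.getLsbD i := by
  rw [getMsbD_eq_getLsbD, decide_eq_true (by omega : n - 1 - i < n), Bool.true_and,
    Nat.sub_sub_self (by omega : i ≤ n - 1)]

theorem getLsbD_sub_one_sub (x : BitVec n) {i : ℕ} (hi : i < n) :
    x.getLsbD (n - 1 - i) = x.getMsbD i := by
  rw [← getMsbD_sub_one_sub x (by omega), Nat.sub_sub_self (by omega : i ≤ n - 1)]

end BitVec

theorem unsigned_lt_iff_lex_msb (n : ℕ) (x y : BitVec n) :
    x.toNat < y.toNat ↔
    ∃ k < n, (∀ j < k, x.getMsbD j = y.getMsbD j) ∧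
      x.getMsbD k = false ∧ y.getMsbD k = true := by
  rw [BitVec.toNat_lt_toNat_iff_exists_getLsbD]
  constructor
  · rintro ⟨i, hi, hx, hy, hagree⟩
    refine ⟨n - 1 - i, by omega, fun j hj => ?_, by rwa [BitVec.getMsbD_sub_one_sub x hi],
      by rwa [BitVec.getMsbD_sub_one_sub y hi]⟩
    rw [← BitVec.getLsbD_sub_one_sub x (by omega), ← BitVec.getLsbD_sub_one_sub y (by omega),
      hagree _ (by omega)]
  · rintro ⟨k, hk, hagree, hx, hy⟩
    refine ⟨n - 1 - k, by omega, by rwa [BitVec.getLsbD_sub_one_sub x hk],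
      by rwa [BitVec.getLsbD_sub_one_sub y hk], fun j hj => ?_⟩
    rcases Nat.lt_or_ge j n with hjn | hjn
    · rw [← BitVec.getMsbD_sub_one_sub x hjn, ← BitVec.getMsbD_sub_one_sub y hjn,
        hagree _ (by omega)]
    · rw [BitVec.getLsbD_of_ge x j hjn, BitVec.getLsbD_of_ge y j hjn]
end

section
/- Fix E ≥ 2 and S ≥ 2 and consider FP patterns of sort (E,S). For all non-NaN patterns x, y with sgn x = false and sgn y = false: if e x < e y then val x < val y, regardless of the significand fields m x and m y. -/
/-- The sign bit of an FP pattern of sort (E,S): the most significant bit. -/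
def FP.sgn (E S : ℕ) (x : BitVec (E + S)) : Bool := x.getMsbD 0

/-- The exponent field of an FP pattern of sort (E,S). -/
def FP.efield (E S : ℕ) (x : BitVec (E + S)) : ℕ := (x.toNat / 2 ^ (S - 1)) % 2 ^ E

/-- The significand field of an FP pattern of sort (E,S). -/
def FP.mfield (E S : ℕ) (x : BitVec (E + S)) : ℕ := x.toNat % 2 ^ (S - 1)

/-- The exponent bias of sort (E,S). -/
def FP.bias (E : ℕ) : ℤ := 2 ^ (E - 1) - 1

/-- An FP pattern is NaN iff its exponent field is all-ones and its significand is nonzero. -/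
def FP.isNaN (E S : ℕ) (x : BitVec (E + S)) : Prop :=
  FP.efield E S x = 2 ^ E - 1 ∧ FP.mfield E S x ≠ 0

/-- The IEEE 754 value of a (non-NaN) FP pattern of sort (E,S), as an extended real. -/
noncomputable def FP.val (E S : ℕ) (x : BitVec (E + S)) : EReal :=
  if FP.efield E S x = 2 ^ E - 1 then
    (if FP.sgn E S x then (⊥ : EReal) else (⊤ : EReal))
  else if FP.efield E S x = 0 then
    (((if FP.sgn E S x then (-1 : ℝ) else 1) * 2 ^ ((1 : ℤ) - FP.bias E) *
        ((FP.mfield E S x : ℝ) / 2 ^ (S - 1)) : ℝ) : EReal)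
  else
    (((if FP.sgn E S x then (-1 : ℝ) else 1) * 2 ^ ((FP.efield E S x : ℤ) - FP.bias E) *
        (1 + (FP.mfield E S x : ℝ) / 2 ^ (S - 1)) : ℝ) : EReal)

/-!
A positive pattern with exponent field `e` has value in `[2 ^ (e - bias), 2 ^ (e + 1 - bias))`:
the significand factor lies in `[1, 2)` for normals, and a subnormal (`e = 0`) lies below
`2 ^ (1 - bias)`. These binades are disjoint and increase with `e`, and the all-ones exponent is
`+∞` whatever the significand.
-/

namespace FP

variable {E S : ℕ} (x : BitVec (E + S))

theorem efield_lt_two_pow : efield E S x < 2 ^ E :=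
  Nat.mod_lt _ (by positivity)

theorem mfield_div_lt_one : (mfield E S x : ℝ) / 2 ^ (S - 1) < 1 := by
  rw [div_lt_one (by positivity)]
  exact_mod_cast Nat.mod_lt _ (by positivity)

variable {x}

theorem val_lt_two_zpow (hs : sgn E S x = false) (he : efield E S x ≠ 2 ^ E - 1) :
    val E S x < ((2 : ℝ) ^ ((efield E S x : ℤ) + 1 - bias E) : ℝ) := by
  have hm := mfield_div_lt_one (S := S) x
  have hm0 : (0 : ℝ) ≤ (mfield E S x : ℝ) / 2 ^ (S - 1) := by positivity
  simp only [val, hs, if_neg he, Bool.false_eq_true, if_false, one_mul]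
  split_ifs with h0 <;> rw [EReal.coe_lt_coe_iff]
  · rw [h0, Nat.cast_zero, zero_add]
    exact mul_lt_of_lt_one_right (by positivity) hm
  · calc (2 : ℝ) ^ ((efield E S x : ℤ) - bias E) * (1 + (mfield E S x : ℝ) / 2 ^ (S - 1))
        < 2 ^ ((efield E S x : ℤ) - bias E) * 2 := by gcongr; linarith
      _ = 2 ^ ((efield E S x : ℤ) + 1 - bias E) := by
        rw [← zpow_add_one₀ two_ne_zero]; ring_nf

theorem two_zpow_le_val (hs : sgn E S x = false) (he : efield E S x ≠ 0) :
    (((2 : ℝ) ^ ((efield E S x : ℤ) - bias E) : ℝ) : EReal) ≤ val E S x := by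
  have hm0 : (0 : ℝ) ≤ (mfield E S x : ℝ) / 2 ^ (S - 1) := by positivity
  simp only [val, hs, if_neg he, Bool.false_eq_true, if_false, one_mul]
  split_ifs
  · exact le_top
  · exact EReal.coe_le_coe_iff.2 (le_mul_of_one_le_right (by positivity) (by linarith))

end FP

theorem fp_pos_exponent_monotone_general (E S : ℕ)
    (x y : BitVec (E + S))
    (hsx : FP.sgn E S x = false) (hsy : FP.sgn E S y = false)
    (he : FP.efield E S x < FP.efield E S y) :
    FP.val E S x < FP.val E S y := by
  have hx_fin : FP.efield E S x ≠ 2 ^ E - 1 := by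
    have := FP.efield_lt_two_pow (S := S) y
    omega
  calc FP.val E S x < ((2 : ℝ) ^ ((FP.efield E S x : ℤ) + 1 - FP.bias E) : ℝ) :=
        FP.val_lt_two_zpow hsx hx_fin
    _ ≤ ((2 : ℝ) ^ ((FP.efield E S y : ℤ) - FP.bias E) : ℝ) := by
        gcongr
        · norm_num
        · omega
    _ ≤ FP.val E S y := FP.two_zpow_le_val hsy (by omega)

theorem fp_pos_exponent_monotone (E S : ℕ) (hE : 2 ≤ E) (hS : 2 ≤ S)
    (x y : BitVec (E + S)) (hx : ¬ FP.isNaN E S x) (hy : ¬ FP.isNaN E S y)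
    (hsx : FP.sgn E S x = false) (hsy : FP.sgn E S y = false)
    (he : FP.efield E S x < FP.efield E S y) :
    FP.val E S x < FP.val E S y :=
  fp_pos_exponent_monotone_general E S x y hsx hsy he
end

section
/- Fix E ≥ 2 and S ≥ 2 and consider FP patterns of sort (E,S). For all non-NaN patterns x, y with sgn x = true, sgn y = true, and e x = e y < 2^E - 1: if m x < m y then val x > val y. -/
namespace FP

/-- Subnormals (`e = 0`) lie in the binade of exponent `1 - bias`, like the smallest normals. -/
def scaleExp (E e : ℕ) : ℤ := if e = 0 then 1 - bias E else e - bias E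

def hiddenBit (e : ℕ) : ℝ := if e = 0 then 0 else 1

theorem val_eq_of_efield_ne {E S : ℕ} {x : BitVec (E + S)} (hfin : efield E S x ≠ 2 ^ E - 1) :
    val E S x = (((if sgn E S x then (-1 : ℝ) else 1) * 2 ^ scaleExp E (efield E S x) *
      (hiddenBit (efield E S x) + (mfield E S x : ℝ) / 2 ^ (S - 1)) : ℝ) : EReal) := by
  rw [val, if_neg hfin, scaleExp, hiddenBit]
  split_ifs <;> simp

theorem scale_mul_significand_strictMono (S : ℕ) (k : ℤ) (h : ℝ) :
    StrictMono fun m : ℕ => (2 : ℝ) ^ k * (h + (m : ℝ) / 2 ^ (S - 1)) := by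
  intro m m' hm
  dsimp only
  gcongr

end FP

theorem fp_neg_significand_antitone_general (E S : ℕ)
    (x y : BitVec (E + S))
    (hsx : FP.sgn E S x = true) (hsy : FP.sgn E S y = true)
    (he : FP.efield E S x = FP.efield E S y)
    (helt : FP.efield E S x < 2 ^ E - 1)
    (hm : FP.mfield E S x < FP.mfield E S y) :
    FP.val E S x > FP.val E S y := by
  rw [FP.val_eq_of_efield_ne helt.ne, FP.val_eq_of_efield_ne (he ▸ helt.ne), hsx, hsy, he]
  simp only [if_true, neg_mul, one_mul, gt_iff_lt, EReal.coe_lt_coe_iff, neg_lt_neg_iff]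
  exact FP.scale_mul_significand_strictMono S _ _ hm

theorem fp_neg_significand_antitone (E S : ℕ) (hE : 2 ≤ E) (hS : 2 ≤ S)
    (x y : BitVec (E + S)) (hx : ¬ FP.isNaN E S x) (hy : ¬ FP.isNaN E S y)
    (hsx : FP.sgn E S x = true) (hsy : FP.sgn E S y = true)
    (he : FP.efield E S x = FP.efield E S y)
    (helt : FP.efield E S x < 2 ^ E - 1)
    (hm : FP.mfield E S x < FP.mfield E S y) :
    FP.val E S x > FP.val E S y :=
  fp_neg_significand_antitone_general E S x y hsx hsy he helt hm
end

section
/- Fix E ≥ 2 and S ≥ 2 and consider FP patterns of sort (E,S). For all non-NaN patterns x, y with sgn x = true and sgn y = true: val x < val y if and only if x.toNat > y.toNat. That is, on non-NaN patterns with sign bit 1, the IEEE 754 value is a strictly decreasing function of the pattern's unsigned integer encoding. -/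
/-!
A pattern with sign bit set has `x.toNat = 2 ^ (E + S - 1) + n`, where the low bits `n` encode the
magnitude `|val x|` with exponent field `n / 2 ^ (S - 1)` and significand field `n % 2 ^ (S - 1)`.
The magnitude is strictly increasing in `n`: within a binade the significand grows, and stepping
from the largest significand of one binade to the next exponent passes from a value below `2 ^ k`
to `2 ^ k` (subnormals use the exponent `1 - bias` of the first normal binade). The all-ones
exponent gives `∞`, above every finite magnitude. Negation then reverses the order.
-/

namespace FP

section Fields

variable {E S : ℕ}

theorem sgn_eq_true_iff (x : BitVec (E + S)) : sgn E S x = true ↔ 2 ^ (E + S - 1) ≤ x.toNat := by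
  show x.msb = true ↔ _
  rw [BitVec.msb_eq_decide, decide_eq_true_iff]

theorem toNat_eq_of_sgn_eq_true {x : BitVec (E + S)} (hs : sgn E S x = true) :
    x.toNat = 2 ^ (E + S - 1) + x.toNat % 2 ^ (E + S - 1) := by
  have hpos : 0 < 2 ^ (E + S - 1) := by positivity
  have hlt : x.toNat < 2 * 2 ^ (E + S - 1) :=
    x.isLt.trans_le (by rw [← pow_succ']; exact Nat.pow_le_pow_right two_pos (by omega))
  have hle : 1 ≤ x.toNat / 2 ^ (E + S - 1) :=
    (Nat.le_div_iff_mul_le hpos).2 (by simpa using (sgn_eq_true_iff x).1 hs)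
  have hdiv : x.toNat / 2 ^ (E + S - 1) < 2 := (Nat.div_lt_iff_lt_mul hpos).2 (by linarith)
  have := Nat.div_add_mod x.toNat (2 ^ (E + S - 1))
  rw [show x.toNat / 2 ^ (E + S - 1) = 1 by omega, mul_one] at this
  omega

theorem efield_eq (hS : 1 ≤ S) (x : BitVec (E + S)) :
    efield E S x = x.toNat % 2 ^ (E + S - 1) / 2 ^ (S - 1) := by
  rw [efield, show E + S - 1 = (S - 1) + E by omega, pow_add, Nat.mod_mul_right_div_self]

theorem mfield_eq (x : BitVec (E + S)) :
    mfield E S x = x.toNat % 2 ^ (E + S - 1) % 2 ^ (S - 1) := by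
  rw [mfield, Nat.mod_mod_of_dvd _ (pow_dvd_pow 2 (by omega))]

theorem efield_eq_iff (hS : 1 ≤ S) (x : BitVec (E + S)) :
    efield E S x = 2 ^ E - 1 ↔ (2 ^ E - 1) * 2 ^ (S - 1) ≤ x.toNat % 2 ^ (E + S - 1) := by
  have hp : 0 < 2 ^ (S - 1) := by positivity
  have hlt : x.toNat % 2 ^ (E + S - 1) < 2 ^ E * 2 ^ (S - 1) := by
    rw [← pow_add, show E + (S - 1) = E + S - 1 by omega]
    exact Nat.mod_lt _ (by positivity)
  have := (Nat.div_lt_iff_lt_mul hp).2 hlt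
  rw [efield_eq hS, ← Nat.le_div_iff_mul_le hp]
  omega

theorem toNat_mod_le_of_not_isNaN (hS : 1 ≤ S) {x : BitVec (E + S)} (hx : ¬ isNaN E S x) :
    x.toNat % 2 ^ (E + S - 1) ≤ (2 ^ E - 1) * 2 ^ (S - 1) := by
  by_cases htop : efield E S x = 2 ^ E - 1
  · have hm : mfield E S x = 0 := by_contra fun hm => hx ⟨htop, hm⟩
    rw [efield_eq hS] at htop
    rw [mfield_eq] at hm
    rw [← Nat.div_add_mod (x.toNat % 2 ^ (E + S - 1)) (2 ^ (S - 1)), htop, hm, mul_comm]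
    simp
  · rw [efield_eq_iff hS] at htop
    omega

end Fields

section Magnitude

noncomputable def finiteMag (E S e m : ℕ) : ℝ :=
  if e = 0 then 2 ^ ((1 : ℤ) - bias E) * ((m : ℝ) / 2 ^ (S - 1))
  else 2 ^ ((e : ℤ) - bias E) * (1 + (m : ℝ) / 2 ^ (S - 1))

theorem finiteMag_lt_finiteMag_right (E S e : ℕ) {m m' : ℕ} (h : m < m') :
    finiteMag E S e m < finiteMag E S e m' := by
  have hdiv : (m : ℝ) / 2 ^ (S - 1) < (m' : ℝ) / 2 ^ (S - 1) := by gcongr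
  unfold finiteMag
  split_ifs <;> gcongr

theorem finiteMag_lt_finiteMag_succ_zero (E S e : ℕ) {m : ℕ} (hm : m < 2 ^ (S - 1)) :
    finiteMag E S e m < finiteMag E S (e + 1) 0 := by
  have hfrac : (m : ℝ) / 2 ^ (S - 1) < 1 := (div_lt_one (by positivity)).2 (by exact_mod_cast hm)
  unfold finiteMag
  rcases Nat.eq_zero_or_pos e with rfl | he
  · have hpow : (0 : ℝ) < 2 ^ ((1 : ℤ) - bias E) := by positivity
    simpa using mul_lt_mul_of_pos_left hfrac hpow
  · have hpow : (0 : ℝ) < 2 ^ ((e : ℤ) - bias E) := by positivity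
    rw [if_neg he.ne', if_neg e.succ_ne_zero, Nat.cast_succ, add_sub_right_comm,
      zpow_add_one₀ two_ne_zero]
    simpa using mul_lt_mul_of_pos_left (show 1 + (m : ℝ) / 2 ^ (S - 1) < 2 by linarith) hpow

noncomputable def mag (E S n : ℕ) : ℝ := finiteMag E S (n / 2 ^ (S - 1)) (n % 2 ^ (S - 1))

theorem mag_strictMono (E S : ℕ) : StrictMono (mag E S) := by
  refine strictMono_nat_of_lt_succ fun n => ?_
  have hp : 0 < 2 ^ (S - 1) := by positivity
  have hdm := Nat.div_add_mod n (2 ^ (S - 1))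
  have hr := Nat.mod_lt n hp
  unfold mag
  rcases Nat.lt_or_ge (n % 2 ^ (S - 1) + 1) (2 ^ (S - 1)) with hnext | hcarry
  · have hsucc : n + 1 = 2 ^ (S - 1) * (n / 2 ^ (S - 1)) + (n % 2 ^ (S - 1) + 1) := by omega
    rw [hsucc, Nat.mul_add_div hp, Nat.mul_add_mod, Nat.div_eq_of_lt hnext, add_zero,
      Nat.mod_eq_of_lt hnext]
    exact finiteMag_lt_finiteMag_right E S _ (Nat.lt_succ_self _)
  · have hsucc : n + 1 = 2 ^ (S - 1) * (n / 2 ^ (S - 1) + 1) := by rw [mul_add_one]; omega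
    rw [hsucc, Nat.mul_div_cancel_left _ hp, Nat.mul_mod_right]
    exact finiteMag_lt_finiteMag_succ_zero E S _ hr

noncomputable def extMag (E S n : ℕ) : EReal :=
  if (2 ^ E - 1) * 2 ^ (S - 1) ≤ n then ⊤ else (mag E S n : EReal)

theorem extMag_strictMonoOn (E S : ℕ) :
    StrictMonoOn (extMag E S) (Set.Iic ((2 ^ E - 1) * 2 ^ (S - 1))) := by
  intro a _ b hb hab
  have ha : ¬ (2 ^ E - 1) * 2 ^ (S - 1) ≤ a := by rw [Set.mem_Iic] at hb; omega
  unfold extMag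
  rw [if_neg ha]
  split_ifs
  · exact EReal.coe_lt_top _
  · exact EReal.coe_lt_coe_iff.2 (mag_strictMono E S hab)

end Magnitude

theorem val_eq_neg_extMag {E S : ℕ} (hS : 1 ≤ S) {x : BitVec (E + S)} (hs : sgn E S x = true) :
    val E S x = -extMag E S (x.toNat % 2 ^ (E + S - 1)) := by
  simp only [val, extMag, ← efield_eq_iff hS, hs, mag, finiteMag, ← efield_eq hS, ← mfield_eq]
  split_ifs
  · exact EReal.neg_top.symm
  all_goals rw [← EReal.coe_neg]; congr 1; ring

end FP

theorem fp_neg_val_lt_iff_toNat_gt_general (E S : ℕ) (hS : 2 ≤ S)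
    (x y : BitVec (E + S)) (hx : ¬ FP.isNaN E S x) (hy : ¬ FP.isNaN E S y)
    (hsx : FP.sgn E S x = true) (hsy : FP.sgn E S y = true) :
    FP.val E S x < FP.val E S y ↔ y.toNat < x.toNat := by
  have hS1 : 1 ≤ S := by omega
  rw [FP.val_eq_neg_extMag hS1 hsx, FP.val_eq_neg_extMag hS1 hsy, EReal.neg_lt_neg_iff,
    (FP.extMag_strictMonoOn E S).lt_iff_lt (FP.toNat_mod_le_of_not_isNaN hS1 hy)
      (FP.toNat_mod_le_of_not_isNaN hS1 hx)]
  have := FP.toNat_eq_of_sgn_eq_true hsx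
  have := FP.toNat_eq_of_sgn_eq_true hsy
  omega

theorem fp_neg_val_lt_iff_toNat_gt (E S : ℕ) (hE : 2 ≤ E) (hS : 2 ≤ S)
    (x y : BitVec (E + S)) (hx : ¬ FP.isNaN E S x) (hy : ¬ FP.isNaN E S y)
    (hsx : FP.sgn E S x = true) (hsy : FP.sgn E S y = true) :
    FP.val E S x < FP.val E S y ↔ y.toNat < x.toNat :=
  fp_neg_val_lt_iff_toNat_gt_general E S hS x y hx hy hsx hsy
end

section
/- (Lemma 1 of the paper, minimization case.) Fix E ≥ 2 and S ≥ 2, let n := E + S, and let k < n. Let z be a non-NaN FP pattern of sort (E,S) that is a dynamic attractor for its own k-bit prefix, i.e., val z ≤ val w for every non-NaN pattern w with w.getMsbD j = z.getMsbD j for all j < k. Then for all non-NaN patterns x, y with x.getMsbD j = z.getMsbD j and y.getMsbD j = z.getMsbD j for all j < k, x.getMsbD k = z.getMsbD k, and y.getMsbD k = ¬(z.getMsbD k), we have val x ≤ val y. -/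
/-! Read as a natural number, a pattern `x` is `sgn x · 2^(E+S-1) + (e x · 2^(S-1) + m x)`, and the
value is strictly increasing in `(e x, m x)` lexicographically (each binade lies below the next).
Hence, among non-NaN patterns of one sign, the value is strictly increasing in `x.toNat` for `+`
and strictly decreasing for `-`. If `k ≥ 1` the prefix fixes the sign, so of two patterns sharing
the first `k` bits, the one whose `k`-th bit equals the sign bit is strictly smaller; were that not
`z`'s `k`-th bit, `y` would be strictly below `z`. If `k = 0`, the pattern of `-∞` forces `z` to be
negative, so `x ≤ 0 ≤ y`. -/

theorem BitVec.toNat_lt_toNat_of_getMsbD_s15 {n k : ℕ} {u v : BitVec n}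
    (hpre : ∀ j < k, u.getMsbD j = v.getMsbD j)
    (hu : u.getMsbD k = false) (hv : v.getMsbD k = true) : u.toNat < v.toNat := by
  have hk : k < n := by
    by_contra h
    simp [BitVec.getMsbD_of_ge v k (by omega)] at hv
  have hbit : ∀ w : BitVec n, w.toNat.testBit (n - 1 - k) = w.getMsbD k := fun w => by
    rw [BitVec.testBit_toNat, BitVec.getMsbD_eq_getLsbD]
    simp [hk]
  refine Nat.lt_of_testBit (n - 1 - k) ((hbit u).trans hu) ((hbit v).trans hv) fun j hj => ?_
  simp only [BitVec.testBit_toNat, BitVec.getLsbD_eq_getMsbD]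
  by_cases hjn : j < n
  · rw [hpre _ (by omega)]
  · simp [hjn]

namespace FP

variable {E S : ℕ}

noncomputable def absVal (E S e m : ℕ) : EReal :=
  if e = 2 ^ E - 1 then ⊤
  else if e = 0 then (((2 : ℝ) ^ ((1 : ℤ) - bias E) * ((m : ℝ) / 2 ^ (S - 1)) : ℝ) : EReal)
  else (((2 : ℝ) ^ ((e : ℤ) - bias E) * (1 + (m : ℝ) / 2 ^ (S - 1)) : ℝ) : EReal)

theorem absVal_nonneg (e m : ℕ) : 0 ≤ absVal E S e m := by
  unfold absVal
  split_ifs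
  · exact le_top
  all_goals exact EReal.coe_nonneg.mpr (by positivity)

theorem val_of_sgn_false {x : BitVec (E + S)} (h : sgn E S x = false) :
    val E S x = absVal E S (efield E S x) (mfield E S x) := by
  simp [val, absVal, h]

theorem val_of_sgn_true {x : BitVec (E + S)} (h : sgn E S x = true) :
    val E S x = -absVal E S (efield E S x) (mfield E S x) := by
  simp only [val, absVal, h, if_true]
  split_ifs <;> simp

theorem val_nonneg_of_sgn_false {x : BitVec (E + S)} (h : sgn E S x = false) :
    0 ≤ val E S x :=
  val_of_sgn_false h ▸ absVal_nonneg _ _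

theorem val_nonpos_of_sgn_true {x : BitVec (E + S)} (h : sgn E S x = true) :
    val E S x ≤ 0 :=
  val_of_sgn_true h ▸ EReal.neg_le_zero.mpr (absVal_nonneg _ _)

theorem absVal_lt_two_zpow {e m : ℕ} (he : e ≠ 2 ^ E - 1) (hm : m < 2 ^ (S - 1)) :
    absVal E S e m < (((2 : ℝ) ^ ((e : ℤ) + 1 - bias E) : ℝ) : EReal) := by
  have hfrac : (m : ℝ) / 2 ^ (S - 1) < 1 := (div_lt_one (by positivity)).mpr (by exact_mod_cast hm)
  unfold absVal
  rw [if_neg he]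
  split_ifs with he₀
  · refine EReal.coe_lt_coe_iff.mpr ?_
    rw [he₀, Nat.cast_zero, zero_add]
    exact mul_lt_of_lt_one_right (by positivity) hfrac
  · refine EReal.coe_lt_coe_iff.mpr ?_
    calc (2 : ℝ) ^ ((e : ℤ) - bias E) * (1 + (m : ℝ) / 2 ^ (S - 1))
        < 2 ^ ((e : ℤ) - bias E) * 2 := by gcongr; linarith
      _ = 2 ^ ((e : ℤ) + 1 - bias E) := by
        rw [← zpow_add_one₀ two_ne_zero]; ring_nf

theorem two_zpow_le_absVal {e : ℕ} (he : e ≠ 0) (m : ℕ) :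
    (((2 : ℝ) ^ ((e : ℤ) - bias E) : ℝ) : EReal) ≤ absVal E S e m := by
  unfold absVal
  rw [if_neg he]
  split_ifs
  · exact le_top
  · exact EReal.coe_le_coe_iff.mpr (le_mul_of_one_le_right (by positivity)
      (le_add_of_nonneg_right (by positivity)))

theorem absVal_lt_absVal_of_lt_left {e₁ e₂ m₁ : ℕ} (he : e₁ < e₂) (he₂ : e₂ < 2 ^ E)
    (hm₁ : m₁ < 2 ^ (S - 1)) (m₂ : ℕ) : absVal E S e₁ m₁ < absVal E S e₂ m₂ :=
  calc absVal E S e₁ m₁ < (((2 : ℝ) ^ ((e₁ : ℤ) + 1 - bias E) : ℝ) : EReal) :=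
        absVal_lt_two_zpow (by omega) hm₁
    _ ≤ (((2 : ℝ) ^ ((e₂ : ℤ) - bias E) : ℝ) : EReal) :=
        EReal.coe_le_coe_iff.mpr (zpow_le_zpow_right₀ one_le_two (by omega))
    _ ≤ absVal E S e₂ m₂ := two_zpow_le_absVal (by omega) m₂

theorem absVal_lt_absVal_of_lt_right {e m₁ m₂ : ℕ} (he : e ≠ 2 ^ E - 1) (hm : m₁ < m₂) :
    absVal E S e m₁ < absVal E S e m₂ := by
  have hfrac : (m₁ : ℝ) / 2 ^ (S - 1) < (m₂ : ℝ) / 2 ^ (S - 1) := by gcongr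
  unfold absVal
  simp only [if_neg he]
  split_ifs
  · exact EReal.coe_lt_coe_iff.mpr (mul_lt_mul_of_pos_left hfrac (by positivity))
  · exact EReal.coe_lt_coe_iff.mpr (mul_lt_mul_of_pos_left (by linarith) (by positivity))

theorem sgn_eq_decide (x : BitVec (E + S)) : sgn E S x = decide (2 ^ (E + S - 1) ≤ x.toNat) :=
  (BitVec.msb_eq_getMsbD_zero x).symm.trans (BitVec.msb_eq_decide x)

theorem toNat_eq (hS : 1 ≤ S) (x : BitVec (E + S)) :
    x.toNat = (if sgn E S x then 2 ^ (E + S - 1) else 0)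
      + (efield E S x * 2 ^ (S - 1) + mfield E S x) := by
  have hlow : x.toNat % 2 ^ (E + S - 1) = efield E S x * 2 ^ (S - 1) + mfield E S x := by
    rw [show E + S - 1 = (S - 1) + E by omega, pow_add, Nat.mod_mul, efield, mfield]
    ring
  have hlt : x.toNat < 2 ^ (E + S - 1) + 2 ^ (E + S - 1) := by
    rw [← two_mul, ← pow_succ', show E + S - 1 + 1 = E + S by omega]
    exact x.isLt
  rw [← hlow, sgn_eq_decide]
  by_cases h : 2 ^ (E + S - 1) ≤ x.toNat
  · rw [decide_eq_true h, if_pos rfl, Nat.mod_eq_sub_mod h, Nat.mod_eq_of_lt (by omega)]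
    omega
  · rw [decide_eq_false h, Nat.mod_eq_of_lt (by omega)]
    simp

theorem fields_lex_of_toNat_lt (hS : 1 ≤ S) {u v : BitVec (E + S)}
    (hsgn : sgn E S u = sgn E S v) (h : u.toNat < v.toNat) :
    efield E S u < efield E S v ∨ efield E S u = efield E S v ∧ mfield E S u < mfield E S v := by
  have hmv : mfield E S v < 2 ^ (S - 1) := Nat.mod_lt _ (by positivity)
  rw [toNat_eq hS u, toNat_eq hS v, hsgn, Nat.add_lt_add_iff_left] at h
  rcases lt_trichotomy (efield E S u) (efield E S v) with he | he | he
  · exact .inl he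
  · exact .inr ⟨he, by rw [he] at h; omega⟩
  · have : (efield E S v + 1) * 2 ^ (S - 1) ≤ efield E S u * 2 ^ (S - 1) :=
      Nat.mul_le_mul_right _ he
    nlinarith

theorem absVal_lt_absVal_of_toNat_lt (hS : 1 ≤ S) {u v : BitVec (E + S)} (hv : ¬isNaN E S v)
    (hsgn : sgn E S u = sgn E S v) (h : u.toNat < v.toNat) :
    absVal E S (efield E S u) (mfield E S u) < absVal E S (efield E S v) (mfield E S v) := by
  rcases fields_lex_of_toNat_lt hS hsgn h with he | ⟨he, hm⟩
  · exact absVal_lt_absVal_of_lt_left he (Nat.mod_lt _ (by positivity))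
      (Nat.mod_lt _ (by positivity)) _
  · rw [he]
    exact absVal_lt_absVal_of_lt_right (fun hmax => hv ⟨hmax, by omega⟩) hm

theorem val_lt_val_of_getMsbD (hS : 1 ≤ S) {u v : BitVec (E + S)} {k : ℕ}
    (hu : ¬isNaN E S u) (hv : ¬isNaN E S v) (hk : 0 < k)
    (hpre : ∀ j < k, u.getMsbD j = v.getMsbD j)
    (huk : u.getMsbD k = sgn E S u) (hvk : v.getMsbD k = !sgn E S u) :
    val E S u < val E S v := by
  have hsgn : sgn E S u = sgn E S v := hpre 0 hk
  cases hs : sgn E S u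
  · rw [hs] at huk hvk
    rw [val_of_sgn_false hs, val_of_sgn_false (hsgn ▸ hs)]
    exact absVal_lt_absVal_of_toNat_lt hS hv hsgn (BitVec.toNat_lt_toNat_of_getMsbD_s15 hpre huk hvk)
  · rw [hs] at huk hvk
    rw [val_of_sgn_true hs, val_of_sgn_true (hsgn ▸ hs), EReal.neg_lt_neg_iff]
    exact absVal_lt_absVal_of_toNat_lt hS hu hsgn.symm
      (BitVec.toNat_lt_toNat_of_getMsbD_s15 (fun j hj => (hpre j hj).symm) hvk huk)

def negInf (E S : ℕ) : BitVec (E + S) :=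
  BitVec.ofNat (E + S) ((2 ^ (E + 1) - 1) * 2 ^ (S - 1))

theorem toNat_negInf (hS : 1 ≤ S) : (negInf E S).toNat = (2 ^ (E + 1) - 1) * 2 ^ (S - 1) := by
  have hlt : (2 ^ (E + 1) - 1) * 2 ^ (S - 1) < 2 ^ (E + S) :=
    calc _ < 2 ^ (E + 1) * 2 ^ (S - 1) :=
          Nat.mul_lt_mul_of_pos_right (Nat.sub_lt (by positivity) one_pos) (by positivity)
      _ = 2 ^ (E + S) := by rw [← pow_add, show E + 1 + (S - 1) = E + S by omega]
  rw [negInf, BitVec.toNat_ofNat, Nat.mod_eq_of_lt hlt]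

theorem sgn_negInf (hS : 1 ≤ S) : sgn E S (negInf E S) = true := by
  rw [sgn_eq_decide, toNat_negInf hS, decide_eq_true_iff,
    show E + S - 1 = E + (S - 1) by omega, pow_add]
  exact Nat.mul_le_mul_right _ (by rw [pow_succ]; have := Nat.one_le_two_pow (n := E); omega)

theorem efield_negInf (hS : 1 ≤ S) : efield E S (negInf E S) = 2 ^ E - 1 := by
  rw [efield, toNat_negInf hS, Nat.mul_div_cancel _ (by positivity),
    show 2 ^ (E + 1) - 1 = 2 ^ E - 1 + 2 ^ E by rw [pow_succ]; omega, Nat.add_mod_right]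
  exact Nat.mod_eq_of_lt (Nat.sub_lt (by positivity) one_pos)

theorem mfield_negInf (hS : 1 ≤ S) : mfield E S (negInf E S) = 0 := by
  rw [mfield, toNat_negInf hS, Nat.mul_mod_left]

theorem not_isNaN_negInf (hS : 1 ≤ S) : ¬isNaN E S (negInf E S) :=
  fun h => h.2 (mfield_negInf hS)

theorem val_negInf (hS : 1 ≤ S) : val E S (negInf E S) = ⊥ := by
  simp [val, efield_negInf hS, sgn_negInf hS]

end FP

theorem fp_dynamic_attractor_bit_is_best_general (E S : ℕ) (hS : 2 ≤ S)
    (k : ℕ)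
    (z : BitVec (E + S)) (hz : ¬ FP.isNaN E S z)
    (hattr : ∀ w : BitVec (E + S), ¬ FP.isNaN E S w →
        (∀ j < k, w.getMsbD j = z.getMsbD j) → FP.val E S z ≤ FP.val E S w)
    (x y : BitVec (E + S)) (hx : ¬ FP.isNaN E S x) (hy : ¬ FP.isNaN E S y)
    (hxpre : ∀ j < k, x.getMsbD j = z.getMsbD j)
    (hypre : ∀ j < k, y.getMsbD j = z.getMsbD j)
    (hxk : x.getMsbD k = z.getMsbD k)
    (hyk : y.getMsbD k = !(z.getMsbD k)) :
    FP.val E S x ≤ FP.val E S y := by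
  have hS₁ : 1 ≤ S := by omega
  rcases Nat.eq_zero_or_pos k with rfl | hk
  · have hsz : FP.sgn E S z = true := by
      by_contra h
      have hbot := hattr (FP.negInf E S) (FP.not_isNaN_negInf hS₁) (by simp)
      rw [FP.val_negInf hS₁] at hbot
      exact absurd ((FP.val_nonneg_of_sgn_false (by simpa using h)).trans hbot) (by simp)
    have hsy : FP.sgn E S y = !FP.sgn E S z := hyk
    exact (FP.val_nonpos_of_sgn_true (hxk.trans hsz)).trans
      (FP.val_nonneg_of_sgn_false (by rw [hsy, hsz]; rfl))
  · have hsx : FP.sgn E S x = FP.sgn E S z := hxpre 0 hk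
    by_cases hb : z.getMsbD k = FP.sgn E S z
    · refine (FP.val_lt_val_of_getMsbD hS₁ hx hy hk
        (fun j hj => (hxpre j hj).trans (hypre j hj).symm) ?_ ?_).le
      · rw [hxk, hb, hsx]
      · rw [hyk, hb, hsx]
    · have hsy : FP.sgn E S y = FP.sgn E S z := hypre 0 hk
      have hzk : z.getMsbD k = !FP.sgn E S z := Bool.eq_not.mpr hb
      have hyz : FP.val E S y < FP.val E S z := by
        refine FP.val_lt_val_of_getMsbD hS₁ hy hz hk hypre ?_ ?_
        · rw [hyk, hzk, hsy, Bool.not_not]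
        · rw [hzk, hsy]
      exact absurd (hattr y hy hypre) hyz.not_ge

theorem fp_dynamic_attractor_bit_is_best (E S : ℕ) (hE : 2 ≤ E) (hS : 2 ≤ S)
    (k : ℕ) (hk : k < E + S)
    (z : BitVec (E + S)) (hz : ¬ FP.isNaN E S z)
    (hattr : ∀ w : BitVec (E + S), ¬ FP.isNaN E S w →
        (∀ j < k, w.getMsbD j = z.getMsbD j) → FP.val E S z ≤ FP.val E S w)
    (x y : BitVec (E + S)) (hx : ¬ FP.isNaN E S x) (hy : ¬ FP.isNaN E S y)
    (hxpre : ∀ j < k, x.getMsbD j = z.getMsbD j)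
    (hypre : ∀ j < k, y.getMsbD j = z.getMsbD j)
    (hxk : x.getMsbD k = z.getMsbD k)
    (hyk : y.getMsbD k = !(z.getMsbD k)) :
    FP.val E S x ≤ FP.val E S y :=
  fp_dynamic_attractor_bit_is_best_general E S hS k z hz hattr x y hx hy hxpre hypre hxk hyk
end

section
/- Fix E ≥ 2 and S ≥ 2, let n := E + S, and let 1 ≤ k ≤ n. Let z be a non-NaN FP pattern of sort (E,S) with sgn z = false (sign bit 0) and z.getMsbD j = false for every j with k ≤ j < n (all bits strictly below position k are zero). Then val z ≤ val y for every non-NaN pattern y satisfying y.getMsbD j = z.getMsbD j for all j < k. In other words, when the assigned prefix has positive sign, extending it with all zeros yields the dynamic attractor (the minimum-value non-NaN extension). -/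
/-! For patterns with sign bit 0, the exponent and significand fields are the digits of the pattern
read as an unsigned integer, `x.toNat = e * 2 ^ (S - 1) + m`, and the value is monotone in `(e, m)`
for the lexicographic order, with the all-ones exponent giving `+∞`. So on positive patterns the
value is monotone in `x.toNat`, and zeroing every bit below a prefix gives the least integer with
that prefix. -/

theorem BitVec.toNat_le_of_getMsbD_eq_of_getMsbD_eq_false {n k : ℕ} {y z : BitVec n}
    (hpre : ∀ j < k, y.getMsbD j = z.getMsbD j)
    (hlow : ∀ j, k ≤ j → j < n → z.getMsbD j = false) : z.toNat ≤ y.toNat := by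
  refine Nat.le_of_testBit fun i hz => ?_
  rw [BitVec.testBit_toNat] at hz ⊢
  let i' : Fin n := ⟨i, BitVec.lt_of_getLsbD hz⟩
  have hk : (i'.rev : ℕ) < k := by
    by_contra hge
    have hz' := hlow i'.rev (not_lt.1 hge) i'.rev.isLt
    rw [BitVec.getMsbD_rev] at hz'
    exact Bool.false_ne_true (hz'.symm.trans hz)
  rw [← BitVec.getMsbD_rev y i', hpre _ hk, BitVec.getMsbD_rev z i', hz]

theorem Nat.le_of_mul_add_le_mul_add {B e e' m m' : ℕ} (hm' : m' < B)
    (h : e * B + m ≤ e' * B + m') : e ≤ e' := by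
  by_contra! hlt
  nlinarith [Nat.mul_le_mul_right B hlt]

namespace FP

theorem efield_mul_add_mfield {E S : ℕ} {x : BitVec (E + S)} (hx : sgn E S x = false) :
    efield E S x * 2 ^ (S - 1) + mfield E S x = x.toNat := by
  have hlt : x.toNat < 2 ^ (S - 1) * 2 ^ E :=
    calc x.toNat < 2 ^ (E + S - 1) :=
          BitVec.toNat_lt_of_msb_false (by rwa [BitVec.msb_eq_getMsbD_zero])
      _ ≤ 2 ^ (S - 1) * 2 ^ E := by rw [← pow_add]; exact Nat.pow_le_pow_right two_pos (by omega)
  rw [efield, Nat.mod_eq_of_lt (Nat.div_lt_of_lt_mul hlt), mfield, mul_comm]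
  exact Nat.div_add_mod _ _

/-- The magnitude of a finite value with exponent field `e` and significand field `m`, in units of
the least positive subnormal `2 ^ (1 - bias) / B`, where `B = 2 ^ (S - 1)`. -/
def weight (B e m : ℕ) : ℕ := if e = 0 then m else 2 ^ (e - 1) * (B + m)

theorem weight_le_weight {B e e' m m' : ℕ} (hm : m < B) (hm' : m' < B)
    (h : e * B + m ≤ e' * B + m') : weight B e m ≤ weight B e' m' := by
  have hee' : e ≤ e' := Nat.le_of_mul_add_le_mul_add hm' h
  unfold weight
  split_ifs with he he'
  · simpa [he, he'] using h
  · calc m ≤ B + m' := by omega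
      _ ≤ 2 ^ (e' - 1) * (B + m') := Nat.le_mul_of_pos_left _ (Nat.two_pow_pos _)
  · omega
  · rcases hee'.eq_or_lt with rfl | hlt
    · exact Nat.mul_le_mul_left _ (by nlinarith)
    · calc 2 ^ (e - 1) * (B + m) ≤ 2 ^ (e - 1) * (2 * B) := Nat.mul_le_mul_left _ (by omega)
        _ = 2 ^ e * B := by rw [← mul_assoc, ← pow_succ, Nat.sub_add_cancel (by omega)]
        _ ≤ 2 ^ (e' - 1) * B := Nat.mul_le_mul_right _ (Nat.pow_le_pow_right two_pos (by omega))
        _ ≤ 2 ^ (e' - 1) * (B + m') := Nat.mul_le_mul_left _ (by omega)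

theorem val_eq_weight {E S : ℕ} {x : BitVec (E + S)} (hx : sgn E S x = false)
    (he : efield E S x ≠ 2 ^ E - 1) :
    val E S x = (((2 : ℝ) ^ ((1 : ℤ) - bias E) / 2 ^ (S - 1) *
      weight (2 ^ (S - 1)) (efield E S x) (mfield E S x) : ℝ) : EReal) := by
  simp only [val, he, hx, weight, if_false, Bool.false_eq_true, one_mul]
  split_ifs with h0
  · congr 1; ring
  · congr 1
    have hsplit : (efield E S x : ℤ) - bias E = (1 - bias E) + ((efield E S x - 1 : ℕ) : ℤ) := by
      push_cast [Nat.one_le_iff_ne_zero.2 h0]; ring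
    rw [hsplit, zpow_add₀ two_ne_zero, zpow_natCast]
    push_cast
    field_simp

end FP

theorem fp_pos_prefix_all_zeros_attractor_general (E S : ℕ)
    (k : ℕ) (hk1 : 1 ≤ k)
    (z : BitVec (E + S))
    (hsgn : FP.sgn E S z = false)
    (hlow : ∀ j, k ≤ j → j < E + S → z.getMsbD j = false) :
    ∀ y : BitVec (E + S), ¬ FP.isNaN E S y →
      (∀ j < k, y.getMsbD j = z.getMsbD j) → FP.val E S z ≤ FP.val E S y := by
  intro y _ hpre
  have hsgny : FP.sgn E S y = false := (hpre 0 hk1).trans hsgn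
  have hle := BitVec.toNat_le_of_getMsbD_eq_of_getMsbD_eq_false hpre hlow
  by_cases hey : FP.efield E S y = 2 ^ E - 1
  · simp [FP.val, hey, hsgny]
  have hmz : FP.mfield E S z < 2 ^ (S - 1) := Nat.mod_lt _ (Nat.two_pow_pos _)
  have hmy : FP.mfield E S y < 2 ^ (S - 1) := Nat.mod_lt _ (Nat.two_pow_pos _)
  have hfields : FP.efield E S z * 2 ^ (S - 1) + FP.mfield E S z ≤
      FP.efield E S y * 2 ^ (S - 1) + FP.mfield E S y := by
    rwa [FP.efield_mul_add_mfield hsgn, FP.efield_mul_add_mfield hsgny]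
  have hez : FP.efield E S z ≠ 2 ^ E - 1 := by
    have : FP.efield E S y < 2 ^ E := Nat.mod_lt _ (Nat.two_pow_pos E)
    have : FP.efield E S z ≤ FP.efield E S y := Nat.le_of_mul_add_le_mul_add hmy hfields
    omega
  rw [FP.val_eq_weight hsgn hez, FP.val_eq_weight hsgny hey, EReal.coe_le_coe_iff]
  gcongr
  exact FP.weight_le_weight hmz hmy hfields

theorem fp_pos_prefix_all_zeros_attractor (E S : ℕ) (hE : 2 ≤ E) (hS : 2 ≤ S)
    (k : ℕ) (hk1 : 1 ≤ k) (hk2 : k ≤ E + S)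
    (z : BitVec (E + S)) (hz : ¬ FP.isNaN E S z)
    (hsgn : FP.sgn E S z = false)
    (hlow : ∀ j, k ≤ j → j < E + S → z.getMsbD j = false) :
    ∀ y : BitVec (E + S), ¬ FP.isNaN E S y →
      (∀ j < k, y.getMsbD j = z.getMsbD j) → FP.val E S z ≤ FP.val E S y :=
  fp_pos_prefix_all_zeros_attractor_general E S k hk1 z hsgn hlow
end

section
/- Fix E ≥ 2 and S ≥ 2, let n := E + S, and let 1 ≤ k ≤ n. Let z be an FP pattern of sort (E,S) with sgn z = true (sign bit 1), such that there exists j with 1 ≤ j < k, j ≤ E, and z.getMsbD j = false (some assigned exponent bit is zero), and such that z.getMsbD j = true for every j with k ≤ j < n (all bits strictly below position k are one). Then z is not NaN, and val z ≤ val y for every non-NaN pattern y satisfying y.getMsbD j = z.getMsbD j for all j < k. In other words, when the assigned prefix has negative sign and contains a zero exponent bit, extending it with all ones yields the dynamic attractor (the minimum-value non-NaN extension). -/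
/-! A zero exponent bit in the prefix keeps the exponent field of every extension below its
all-ones value, so all extensions are finite. An extension `y` agrees with `z` on the prefix
while `z` is all ones below it, hence `y ≤ z` as unsigned integers. Below the sign bit a pattern
is the code `e * 2^(S-1) + m`, and the magnitude of the value is monotone in that code; with the
sign bit set, the largest code gives the least value. -/

namespace BitVec

theorem toNat_le_of_getMsbD_eq_of_getMsbD_eq_true {w k : ℕ} {x y : BitVec w}
    (hpre : ∀ j < k, y.getMsbD j = x.getMsbD j)
    (hsuf : ∀ j, k ≤ j → j < w → x.getMsbD j = true) :
    y.toNat ≤ x.toNat := by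
  have hdiv : y.toNat / 2 ^ (w - k) = x.toNat / 2 ^ (w - k) := by
    refine Nat.eq_of_testBit_eq fun i => ?_
    simp only [Nat.testBit_div_two_pow, testBit_toNat, getLsbD_eq_getMsbD]
    by_cases hi : i + (w - k) < w
    · simp only [hi, decide_true, Bool.true_and]
      exact hpre _ (by omega)
    · simp [hi]
  have hmod : x.toNat % 2 ^ (w - k) = 2 ^ (w - k) - 1 := by
    refine Nat.eq_of_testBit_eq fun i => ?_
    simp only [Nat.testBit_mod_two_pow, Nat.testBit_two_pow_sub_one, testBit_toNat,
      getLsbD_eq_getMsbD]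
    by_cases hi : i < w - k
    · simp [hi, hsuf (w - 1 - i) (by omega) (by omega), show i < w by omega]
    · simp [hi]
  have hy := Nat.div_add_mod y.toNat (2 ^ (w - k))
  rw [hdiv] at hy
  have hx := Nat.div_add_mod x.toNat (2 ^ (w - k))
  have hlt := Nat.mod_lt y.toNat (Nat.two_pow_pos (w - k))
  omega

theorem toNat_mod_two_pow_pred_of_msb {w : ℕ} {x : BitVec w} (h : x.msb = true) :
    x.toNat % 2 ^ (w - 1) = x.toNat - 2 ^ (w - 1) := by
  rw [msb_eq_decide, decide_eq_true_eq] at h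
  have hw : 2 ^ w ≤ 2 * 2 ^ (w - 1) := by
    rw [← pow_succ']; exact Nat.pow_le_pow_right two_pos (by omega)
  rw [Nat.mod_eq_sub_mod h, Nat.mod_eq_of_lt (by have := x.isLt; omega)]

end BitVec

namespace FP

theorem efield_eq_div {E S : ℕ} (hS : 1 ≤ S) (x : BitVec (E + S)) :
    efield E S x = x.toNat % 2 ^ (E + S - 1) / 2 ^ (S - 1) := by
  rw [show E + S - 1 = (S - 1) + E by omega, pow_add, Nat.mod_mul_right_div_self, efield]

theorem mfield_eq_mod {E S : ℕ} (hS : 1 ≤ S) (x : BitVec (E + S)) :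
    mfield E S x = x.toNat % 2 ^ (E + S - 1) % 2 ^ (S - 1) := by
  rw [Nat.mod_mod_of_dvd _ (Nat.pow_dvd_pow 2 (by omega)), mfield]

theorem efield_ne_of_getMsbD_eq_false {E S j : ℕ} (hS : 1 ≤ S) (hj1 : 1 ≤ j) (hjE : j ≤ E)
    {x : BitVec (E + S)} (hx : x.getMsbD j = false) : efield E S x ≠ 2 ^ E - 1 := by
  intro h
  have hbit : (efield E S x).testBit (E - j) = x.getMsbD j := by
    simp only [efield, Nat.testBit_mod_two_pow, Nat.testBit_div_two_pow, BitVec.testBit_toNat,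
      BitVec.getLsbD_eq_getMsbD, show E + S - 1 - (E - j + (S - 1)) = j by omega]
    simp [show E - j < E by omega, show E - j + (S - 1) < E + S by omega]
  rw [h, Nat.testBit_two_pow_sub_one, hx, decide_eq_false_iff_not] at hbit
  omega

/-- `|val x|` in multiples of the least positive subnormal `2 ^ (1 - bias E - (S - 1))`. -/
def intMagnitude (S e m : ℕ) : ℕ := if e = 0 then m else 2 ^ (e - 1) * (2 ^ (S - 1) + m)

theorem intMagnitude_lt {S e m : ℕ} (hm : m < 2 ^ (S - 1)) :
    intMagnitude S e m < 2 ^ e * 2 ^ (S - 1) := by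
  unfold intMagnitude
  split_ifs with he
  · simpa [he] using hm
  · calc 2 ^ (e - 1) * (2 ^ (S - 1) + m)
        < 2 ^ (e - 1) * (2 * 2 ^ (S - 1)) := by gcongr; omega
      _ = 2 ^ e * 2 ^ (S - 1) := by rw [← mul_assoc, ← pow_succ, Nat.sub_add_cancel (by omega)]

theorem two_pow_le_intMagnitude {S e m : ℕ} (he : e ≠ 0) :
    2 ^ (e - 1) * 2 ^ (S - 1) ≤ intMagnitude S e m := by
  rw [intMagnitude, if_neg he]
  gcongr
  omega

theorem monotone_intMagnitude_div_mod (S : ℕ) :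
    Monotone fun c => intMagnitude S (c / 2 ^ (S - 1)) (c % 2 ^ (S - 1)) := by
  intro a b hab
  have hB := Nat.two_pow_pos (S - 1)
  rcases (Nat.div_le_div_right (c := 2 ^ (S - 1)) hab).eq_or_lt with he | he
  · have ha := Nat.div_add_mod a (2 ^ (S - 1))
    have hb := Nat.div_add_mod b (2 ^ (S - 1))
    rw [he] at ha
    dsimp only
    rw [he, intMagnitude, intMagnitude]
    split_ifs
    · omega
    · gcongr; omega
  · have hb : b / 2 ^ (S - 1) ≠ 0 := (Nat.zero_le _).trans_lt he |>.ne'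
    calc intMagnitude S (a / 2 ^ (S - 1)) (a % 2 ^ (S - 1))
        ≤ 2 ^ (a / 2 ^ (S - 1)) * 2 ^ (S - 1) := (intMagnitude_lt (Nat.mod_lt a hB)).le
      _ ≤ 2 ^ (b / 2 ^ (S - 1) - 1) * 2 ^ (S - 1) :=
        Nat.mul_le_mul_right _ (Nat.pow_le_pow_right two_pos (Nat.le_sub_one_of_lt he))
      _ ≤ intMagnitude S (b / 2 ^ (S - 1)) (b % 2 ^ (S - 1)) := two_pow_le_intMagnitude hb

theorem val_of_sgn_of_efield_ne {E S : ℕ} {x : BitVec (E + S)} (hs : sgn E S x = true)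
    (he : efield E S x ≠ 2 ^ E - 1) :
    val E S x = ((-((2 : ℝ) ^ (1 - bias E) / 2 ^ (S - 1) *
      intMagnitude S (efield E S x) (mfield E S x)) : ℝ) : EReal) := by
  rw [val, if_neg he]
  by_cases h0 : efield E S x = 0
  · rw [if_pos h0]
    refine congrArg ((↑) : ℝ → EReal) ?_
    simp only [h0, hs, intMagnitude, ↓reduceIte]
    ring
  · have hexp :
        (efield E S x : ℤ) - bias E = (1 - bias E) + ((efield E S x - 1 : ℕ) : ℤ) := by
      push_cast [Nat.one_le_iff_ne_zero.mpr h0]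
      ring
    rw [if_neg h0]
    refine congrArg ((↑) : ℝ → EReal) ?_
    simp only [h0, hs, intMagnitude, hexp, ↓reduceIte, zpow_add₀ (two_ne_zero (α := ℝ)),
      zpow_natCast]
    field_simp
    push_cast
    ring

theorem val_le_val_of_toNat_le {E S : ℕ} (hS : 1 ≤ S) {x y : BitVec (E + S)}
    (hxs : sgn E S x = true) (hys : sgn E S y = true)
    (hxe : efield E S x ≠ 2 ^ E - 1) (hye : efield E S y ≠ 2 ^ E - 1)
    (h : y.toNat ≤ x.toNat) : val E S x ≤ val E S y := by
  have hcode : y.toNat % 2 ^ (E + S - 1) ≤ x.toNat % 2 ^ (E + S - 1) := by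
    rw [sgn, ← BitVec.msb_eq_getMsbD_zero] at hxs hys
    rw [BitVec.toNat_mod_two_pow_pred_of_msb hxs, BitVec.toNat_mod_two_pow_pred_of_msb hys]
    omega
  rw [val_of_sgn_of_efield_ne hxs hxe, val_of_sgn_of_efield_ne hys hye, EReal.coe_le_coe_iff,
    neg_le_neg_iff, efield_eq_div hS, efield_eq_div hS, mfield_eq_mod hS, mfield_eq_mod hS]
  gcongr
  exact monotone_intMagnitude_div_mod S hcode

end FP

theorem fp_neg_prefix_all_ones_attractor_general (E S : ℕ) (hS : 2 ≤ S)
    (k : ℕ) (hk1 : 1 ≤ k)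
    (z : BitVec (E + S))
    (hsgn : FP.sgn E S z = true)
    (hexp : ∃ j, 1 ≤ j ∧ j < k ∧ j ≤ E ∧ z.getMsbD j = false)
    (hlow : ∀ j, k ≤ j → j < E + S → z.getMsbD j = true) :
    ¬ FP.isNaN E S z ∧
    (∀ y : BitVec (E + S), ¬ FP.isNaN E S y →
      (∀ j < k, y.getMsbD j = z.getMsbD j) → FP.val E S z ≤ FP.val E S y) := by
  obtain ⟨j, hj1, hjk, hjE, hzj⟩ := hexp
  have hS1 : 1 ≤ S := by omega
  have hz : FP.efield E S z ≠ 2 ^ E - 1 := FP.efield_ne_of_getMsbD_eq_false hS1 hj1 hjE hzj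
  refine ⟨fun hnan => hz hnan.1, fun y _ hprefix => ?_⟩
  have hy : FP.efield E S y ≠ 2 ^ E - 1 :=
    FP.efield_ne_of_getMsbD_eq_false hS1 hj1 hjE (by rw [hprefix j hjk, hzj])
  have hysgn : FP.sgn E S y = true := by rw [FP.sgn, hprefix 0 hk1]; exact hsgn
  exact FP.val_le_val_of_toNat_le hS1 hsgn hysgn hz hy
    (BitVec.toNat_le_of_getMsbD_eq_of_getMsbD_eq_true hprefix hlow)

theorem fp_neg_prefix_all_ones_attractor (E S : ℕ) (hE : 2 ≤ E) (hS : 2 ≤ S)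
    (k : ℕ) (hk1 : 1 ≤ k) (hk2 : k ≤ E + S)
    (z : BitVec (E + S))
    (hsgn : FP.sgn E S z = true)
    (hexp : ∃ j, 1 ≤ j ∧ j < k ∧ j ≤ E ∧ z.getMsbD j = false)
    (hlow : ∀ j, k ≤ j → j < E + S → z.getMsbD j = true) :
    ¬ FP.isNaN E S z ∧
    (∀ y : BitVec (E + S), ¬ FP.isNaN E S y →
      (∀ j < k, y.getMsbD j = z.getMsbD j) → FP.val E S z ≤ FP.val E S y) :=
  fp_neg_prefix_all_ones_attractor_general E S hS k hk1 z hsgn hexp hlow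
end
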